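/- arXiv:2411.01827 — 2 statements merged into one kernel-verified Lean document; each statement's English description precedes it below -/
import Mathlib

section
/- Consider the one-step log-probability-regularized risk-sensitive problem: for $\eta > -1$, $\eta \ne 0$, measurable $Q: U \to \mathbb{R}$ with $\mathcal{Z} := \int_U e^{-Q(u)}du \in (0,\infty)$, and probability densities $\pi$ on $U$, define $J(\pi) = \frac{1}{\eta}\log\left[\int_U \pi(u)\exp(\eta Q(u) + \eta\log\pi(u))du\right]$. Then $\inf_\pi J(\pi) = -\log\mathcal{Z}$, and the infimum is attained uniquely (a.e.) by $\pi^*(u) = e^{-Q(u)}/\mathcal{Z}$. -/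
open MeasureTheory

lemma stmt15_aux {α : Type*} [MeasurableSpace α] (μ0 : Measure α)
    (η : ℝ) (hη1 : -1 < η) (hη0 : η ≠ 0)
    (Q : α → ℝ) (hQ : Measurable Q)
    (hZint : Integrable (fun u => Real.exp (-Q u)) μ0)
    (hZpos : 0 < ∫ u, Real.exp (-Q u) ∂μ0)
    (π : α → ℝ) (hπm : Measurable π) (hπ0 : ∀ u, 0 ≤ π u)
    (hπ1 : ∫ u, π u ∂μ0 = 1)
    (hI : Integrable (fun u => π u * Real.exp (η * Q u + η * Real.log (π u))) μ0) :
    (-Real.log (∫ u, Real.exp (-Q u) ∂μ0) ≤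
      (1/η) * Real.log (∫ u, π u * Real.exp (η * Q u + η * Real.log (π u)) ∂μ0)) ∧
    ((1/η) * Real.log (∫ u, π u * Real.exp (η * Q u + η * Real.log (π u)) ∂μ0) =
        -Real.log (∫ u, Real.exp (-Q u) ∂μ0) →
      π =ᵐ[μ0] fun u => Real.exp (-Q u) / ∫ u', Real.exp (-Q u') ∂μ0) := by
  set Z : ℝ := ∫ u, Real.exp (-Q u) ∂μ0 with hZ
  set I : ℝ := ∫ u, π u * Real.exp (η * Q u + η * Real.log (π u)) ∂μ0 with hIdef
  -- the optimal density
  set πs : α → ℝ := fun u => Real.exp (-Q u) / Z with hπs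
  have hπs_pos : ∀ u, 0 < πs u := fun u => div_pos (Real.exp_pos _) hZpos
  have hπs_meas : Measurable πs := (hQ.neg.exp).div_const Z
  have hπs_int : Integrable πs μ0 := hZint.div_const Z
  have hπs_one : ∫ u, πs u ∂μ0 = 1 := by
    simp only [hπs, integral_div, div_self hZpos.ne']
    exact div_self hZpos.ne'
  -- the tilted measure
  set f : α → NNReal := fun u => Real.toNNReal (πs u) with hf
  have hf_meas : Measurable f := hπs_meas.real_toNNReal
  set μ : Measure α := μ0.withDensity (fun u => (f u : ENNReal)) with hμ
  have hf_coe : ∀ u, (f u : ℝ) = πs u := fun u => Real.coe_toNNReal _ (hπs_pos u).le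
  have hμ_prob : IsProbabilityMeasure μ := by
    constructor
    rw [hμ, withDensity_apply _ MeasurableSet.univ, Measure.restrict_univ]
    have h1 := ofReal_integral_eq_lintegral_ofReal hπs_int
      (Filter.Eventually.of_forall fun u => (hπs_pos u).le)
    rw [hπs_one, ENNReal.ofReal_one] at h1
    rw [show (fun u => (f u : ENNReal)) = fun u => ENNReal.ofReal (πs u) from rfl, ← h1]
  have hπ_int : Integrable π μ0 := by
    by_contra h
    rw [integral_undef h] at hπ1
    exact one_ne_zero hπ1.symm
  -- the likelihood ratio
  set g : α → ℝ := fun u => π u * Real.exp (Q u) * Z with hg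
  have hg0 : ∀ u, 0 ≤ g u := fun u =>
    mul_nonneg (mul_nonneg (hπ0 u) (Real.exp_pos _).le) hZpos.le
  have hfg : ∀ u, (f u : ℝ) * g u = π u := by
    intro u
    rw [hf_coe]
    simp only [hπs, hg]
    have hexp : Real.exp (-Q u) * Real.exp (Q u) = 1 := by
      rw [← Real.exp_add]; simp
    field_simp
    linear_combination π u * hexp
  have hg_int : Integrable g μ := by
    rw [hμ, integrable_withDensity_iff_integrable_smul hf_meas]
    simp only [NNReal.smul_def, smul_eq_mul]
    simpa only [hfg] using hπ_int
  have hg_avg : ∫ u, g u ∂μ = 1 := by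
    rw [hμ, integral_withDensity_eq_integral_smul hf_meas]
    simp only [NNReal.smul_def, smul_eq_mul]
    simpa only [hfg] using hπ1
  set p : ℝ := 1 + η with hp
  have hp0 : 0 < p := by linarith
  -- key pointwise identity
  have key : ∀ u, (f u : ℝ) * (g u) ^ p =
      Real.exp (η * Real.log Z) * (π u * Real.exp (η * Q u + η * Real.log (π u))) := by
    intro u
    rcases eq_or_lt_of_le (hπ0 u) with h0 | hpos
    · rw [hf_coe]
      simp only [hg, ← h0, zero_mul, Real.zero_rpow hp0.ne', mul_zero]
    · have hgpos : 0 < g u := mul_pos (mul_pos hpos (Real.exp_pos _)) hZpos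
      have hlg : Real.log (g u) = Real.log (π u) + Q u + Real.log Z := by
        rw [hg, Real.log_mul (by positivity) hZpos.ne',
          Real.log_mul hpos.ne' (Real.exp_ne_zero _), Real.log_exp]
      rw [Real.rpow_def_of_pos hgpos, hlg, hf_coe]
      have hπu : π u = Real.exp (Real.log (π u)) := (Real.exp_log hpos).symm
      have hZu : πs u = Real.exp (-Q u - Real.log Z) := by
        rw [Real.exp_sub, Real.exp_log hZpos]
      rw [hZu]
      conv_rhs => rw [hπu]
      rw [Real.log_exp, ← Real.exp_add, ← Real.exp_add, ← Real.exp_add]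
      congr 1
      ring
  have hgp_int : Integrable (fun u => (g u) ^ p) μ := by
    rw [hμ, integrable_withDensity_iff_integrable_smul hf_meas]
    simp only [NNReal.smul_def, smul_eq_mul]
    simp only [key]
    exact hI.const_mul _
  have hgp_avg : ∫ u, (g u) ^ p ∂μ = Real.exp (η * Real.log Z) * I := by
    rw [hμ, integral_withDensity_eq_integral_smul hf_meas]
    simp only [NNReal.smul_def, smul_eq_mul, key]
    rw [integral_const_mul]
  -- positivity of I
  have hInn : 0 ≤ I := integral_nonneg fun u => mul_nonneg (hπ0 u) (Real.exp_pos _).le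
  have hIpos : 0 < I := by
    rcases eq_or_lt_of_le hInn with h0 | h; swap
    · exact h
    exfalso
    have := (integral_eq_zero_iff_of_nonneg
      (fun u => mul_nonneg (hπ0 u) (Real.exp_pos _).le) hI).1 h0.symm
    have hπ0ae : π =ᵐ[μ0] 0 := by
      filter_upwards [this] with u hu
      simpa [(Real.exp_pos _).ne'] using hu
    rw [integral_congr_ae hπ0ae] at hπ1
    simp at hπ1
  -- Jensen's inequality
  haveI := hμ_prob
  set c : ℝ := Real.exp (η * Real.log Z) with hc
  have hcpos : 0 < c := Real.exp_pos _
  have hgmem : ∀ᵐ u ∂μ, g u ∈ Set.Ici (0:ℝ) := Filter.Eventually.of_forall hg0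
  have havg : ⨍ u, g u ∂μ = 1 := by rw [average_eq_integral, hg_avg]
  have hcont : ContinuousOn (fun x : ℝ => x ^ p) (Set.Ici (0:ℝ)) := fun x _ =>
    (Real.continuousAt_rpow_const x p (Or.inr hp0.le)).continuousWithinAt
  have hdich : g =ᵐ[μ] Function.const α 1 ∨
      ((0 < η ∧ 1 < c * I) ∨ (η < 0 ∧ c * I < 1)) := by
    rcases lt_or_gt_of_ne hη0 with hneg | hposη
    · have hp1 : p < 1 := by simp only [hp]; linarith
      rcases (Real.strictConcaveOn_rpow hp0 hp1).ae_eq_const_or_lt_map_average hcont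
          isClosed_Ici hgmem hg_int hgp_int with h | h
      · left; rwa [havg] at h
      · right; right
        refine ⟨hneg, ?_⟩
        rw [havg, Real.one_rpow, average_eq_integral, hgp_avg] at h
        exact h
    · have hp1 : 1 < p := by simp only [hp]; linarith
      rcases (strictConvexOn_rpow hp1).ae_eq_const_or_map_average_lt hcont
          isClosed_Ici hgmem hg_int hgp_int with h | h
      · left; rwa [havg] at h
      · right; left
        refine ⟨hposη, ?_⟩
        rw [havg, Real.one_rpow, average_eq_integral, hgp_avg] at h
        exact h
  -- in the a.e.-constant case, the value of the objective is exactly -log Z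
  have hconst_val : g =ᵐ[μ] Function.const α 1 → c * I = 1 := by
    intro h
    have hgp1 : ∫ u, (g u) ^ p ∂μ = 1 := by
      have : (fun u => (g u) ^ p) =ᵐ[μ] fun _ => (1:ℝ) := by
        filter_upwards [h] with u hu
        simp only [Function.const] at hu
        rw [hu, Real.one_rpow]
      rw [integral_congr_ae this]
      simp
    rw [← hgp_avg, hgp1]
  have hA : c * I = 1 → (1/η) * Real.log I = -Real.log Z := by
    intro h
    have hIe : I = Real.exp (-(η * Real.log Z)) := by
      rw [Real.exp_neg, ← hc]
      exact eq_inv_of_mul_eq_one_right h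
    rw [hIe, Real.log_exp]
    field_simp
  have hB : (1/η) * Real.log I = -Real.log Z → c * I = 1 := by
    intro heq
    have h1 : Real.log I = -(η * Real.log Z) := by
      field_simp at heq
      linarith
    have h2 : I = Real.exp (-(η * Real.log Z)) := by
      rw [← h1, Real.exp_log hIpos]
    rw [h2, hc, ← Real.exp_add]
    simp
  -- transfer a.e. statements from μ back to μ0
  have hconst_to : g =ᵐ[μ] Function.const α 1 → π =ᵐ[μ0] πs := by
    intro h
    have h' : ∀ᵐ u ∂μ, g u = 1 := h
    rw [hμ, ae_withDensity_iff hf_meas.coe_nnreal_ennreal] at h'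
    filter_upwards [h'] with u hu
    have hfne : ((f u : ENNReal)) ≠ 0 := by
      simp only [ne_eq, ENNReal.coe_eq_zero]
      rw [← NNReal.coe_eq_zero, hf_coe]
      exact (hπs_pos u).ne'
    have hg1 : g u = 1 := hu hfne
    have hexp : Real.exp (-Q u) * Real.exp (Q u) = 1 := by
      rw [← Real.exp_add]; simp
    have hgu : π u * Real.exp (Q u) * Z = 1 := hg1
    show π u = Real.exp (-Q u) / Z
    field_simp
    linear_combination Real.exp (-Q u) * hgu - π u * Z * hexp
  constructor
  · rcases hdich with h | h
    · exact le_of_eq (hA (hconst_val h)).symm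
    · rcases h with ⟨hposη, hlt⟩ | ⟨hneg, hlt⟩
      · have hexpI : Real.exp (-(η * Real.log Z)) < I := by
          rw [Real.exp_neg, ← hc, ← one_div]
          rw [div_lt_iff₀ hcpos]
          linarith [mul_comm c I]
        have hlog : -(η * Real.log Z) < Real.log I :=
          (Real.lt_log_iff_exp_lt hIpos).2 hexpI
        rw [one_div, inv_mul_eq_div, le_div_iff₀ hposη]
        nlinarith
      · have hexpI : I < Real.exp (-(η * Real.log Z)) := by
          rw [Real.exp_neg, ← hc, ← one_div]
          rw [lt_div_iff₀ hcpos]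
          linarith [mul_comm c I]
        have hlog : Real.log I < -(η * Real.log Z) :=
          (Real.log_lt_iff_lt_exp hIpos).2 hexpI
        rw [one_div, inv_mul_eq_div, le_div_iff_of_neg hneg]
        nlinarith
  · intro heq
    rcases hdich with h | h
    · exact hconst_to h
    · exfalso
      have h1 := hB heq
      rcases h with ⟨_, hlt⟩ | ⟨_, hlt⟩ <;> rw [h1] at hlt <;> exact lt_irrefl 1 hlt

/-- One-step log-probability-regularized risk-sensitive problem (soft Bellman equation,
Theorem 2): `inf_π (1/η) log ∫ π e^{ηQ + η log π} = -log 𝒵`, attained uniquely (a.e.)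
by the Gibbs policy `π*(u) = e^{-Q(u)}/𝒵`. -/
theorem stmt15 {n : ℕ} (U : Set (EuclideanSpace ℝ (Fin n))) (hU : MeasurableSet U)
    (η : ℝ) (hη1 : -1 < η) (hη0 : η ≠ 0)
    (Q : EuclideanSpace ℝ (Fin n) → ℝ) (hQ : Measurable Q)
    (hZint : IntegrableOn (fun u => Real.exp (-Q u)) U)
    (hZpos : 0 < ∫ u in U, Real.exp (-Q u)) :
    (∀ π : EuclideanSpace ℝ (Fin n) → ℝ, Measurable π → (∀ u, 0 ≤ π u) →
        (∫ u in U, π u = 1) →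
        IntegrableOn (fun u => π u * Real.exp (η * Q u + η * Real.log (π u))) U →
        -Real.log (∫ u in U, Real.exp (-Q u)) ≤
          (1 / η) * Real.log
            (∫ u in U, π u * Real.exp (η * Q u + η * Real.log (π u)))) ∧
    (∀ π : EuclideanSpace ℝ (Fin n) → ℝ,
      (∀ u, π u = Real.exp (-Q u) / ∫ u' in U, Real.exp (-Q u')) →
      (1 / η) * Real.log (∫ u in U, π u * Real.exp (η * Q u + η * Real.log (π u))) =
        -Real.log (∫ u in U, Real.exp (-Q u))) ∧
    (∀ π : EuclideanSpace ℝ (Fin n) → ℝ, Measurable π → (∀ u, 0 ≤ π u) →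
      (∫ u in U, π u = 1) →
      IntegrableOn (fun u => π u * Real.exp (η * Q u + η * Real.log (π u))) U →
      (1 / η) * Real.log (∫ u in U, π u * Real.exp (η * Q u + η * Real.log (π u))) =
        -Real.log (∫ u in U, Real.exp (-Q u)) →
      π =ᵐ[volume.restrict U]
        fun u => Real.exp (-Q u) / ∫ u' in U, Real.exp (-Q u')) := by
  refine ⟨?_, ?_, ?_⟩
  · intro π hπm hπ0 hπ1 hIint
    exact (stmt15_aux (volume.restrict U) η hη1 hη0 Q hQ hZint hZpos π hπm hπ0 hπ1 hIint).1
  · intro π hπ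
    set Z : ℝ := ∫ u in U, Real.exp (-Q u) with hZ
    have key : ∀ u, π u * Real.exp (η * Q u + η * Real.log (π u)) =
        Real.exp (-(η * Real.log Z)) * π u := by
      intro u
      rw [hπ u, Real.log_div (Real.exp_ne_zero _) hZpos.ne', Real.log_exp]
      rw [show η * Q u + η * (-Q u - Real.log Z) = -(η * Real.log Z) by ring]
      ring
    have h1 : (∫ u in U, π u * Real.exp (η * Q u + η * Real.log (π u))) =
        Real.exp (-(η * Real.log Z)) := by
      simp_rw [key, hπ]
      rw [integral_const_mul, integral_div, div_self hZpos.ne', mul_one]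
    rw [h1, Real.log_exp]
    field_simp
  · intro π hπm hπ0 hπ1 hIint heq
    exact (stmt15_aux (volume.restrict U) η hη1 hη0 Q hQ hZint hZpos π hπm hπ0 hπ1 hIint).2 heq
end

section
/- Fix $\eta \ne 0$. Let $p_\theta(\tau) = p(x_0)\prod_{t=0}^{T-1}p(x_{t+1}|x_t,u_t)\pi^{(\theta)}(u_t|x_t)$ and $C_\theta(\tau) = c_T(x_T) + \sum_{t=0}^{T-1}(c_t(x_t,u_t) + \log\pi^{(\theta)}(u_t|x_t))$, with $\pi^{(\theta)}$ differentiable in $\theta$ and differentiation under the integral valid. Then $\nabla_\theta \int p_\theta(\tau)e^{\eta C_\theta(\tau)}d\tau = (\eta+1)\,\mathbb{E}_{p_\theta(\tau)}\left[\left(\sum_{t=0}^{T-1}\nabla_\theta\log\pi^{(\theta)}(u_t|x_t)\right)e^{\eta C_\theta(\tau)}\right]$. -/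
open MeasureTheory

lemma aux_grad {E : Type*} [NormedAddCommGroup E] [InnerProductSpace ℝ E] [CompleteSpace E]
    {n : ℕ} (g : Fin n → E → ℝ) (θ : E)
    (hpos : ∀ t θ', 0 < g t θ') (hdiff : ∀ t, DifferentiableAt ℝ (g t) θ)
    (C0 η : ℝ) :
    HasGradientAt (fun θ' => C0 * Real.exp ((η + 1) * ∑ t, Real.log (g t θ')))
      ((C0 * Real.exp ((η + 1) * ∑ t, Real.log (g t θ)) * (η + 1)) •
        ∑ t, gradient (fun θ' => Real.log (g t θ')) θ) θ := by
  have hlog : ∀ t : Fin n, HasGradientAt (fun θ' => Real.log (g t θ'))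
      (gradient (fun θ' => Real.log (g t θ')) θ) θ :=
    fun t => ((hdiff t).log (hpos t θ).ne').hasGradientAt
  have hsum : HasFDerivAt (fun θ' => ∑ t, Real.log (g t θ'))
      (∑ t, (InnerProductSpace.toDual ℝ E) (gradient (fun θ' => Real.log (g t θ')) θ)) θ :=
    HasFDerivAt.fun_sum fun t _ => (hlog t).hasFDerivAt
  set S := ∑ t, Real.log (g t θ) with hS
  have h1 : HasDerivAt (fun y : ℝ => (η + 1) * y) (η + 1) S := by
    simpa using (hasDerivAt_id S).const_mul (η + 1)
  have hout : HasDerivAt (fun y : ℝ => C0 * Real.exp ((η + 1) * y))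
      (C0 * Real.exp ((η + 1) * S) * (η + 1)) S := by
    simpa [mul_assoc] using (h1.exp.const_mul C0)
  have hc := hout.comp_hasFDerivAt θ hsum
  rw [hasGradientAt_iff_hasFDerivAt, _root_.map_smul, map_sum]
  exact hc

/-- Risk-sensitive policy gradient (Proposition 2, without the causality refinement):
with `p_θ(τ) = p(x₀)∏ₜ p(x_{t+1}|x_t,u_t)π^{(θ)}(u_t|x_t)` and
`C_θ(τ) = c_T(x_T) + ∑ₜ (c_t(x_t,u_t) + log π^{(θ)}(u_t|x_t))`,
`∇_θ ∫ p_θ e^{ηC_θ} = (η+1) 𝔼_{p_θ}[(∑ₜ ∇_θ log π^{(θ)}(u_t|x_t)) e^{ηC_θ}]`. -/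
theorem stmt18 {d ns na : ℕ} (T : ℕ) (η : ℝ) (hη : η ≠ 0)
    (p0 : EuclideanSpace ℝ (Fin ns) → ℝ)
    (ptrans : EuclideanSpace ℝ (Fin ns) → EuclideanSpace ℝ (Fin ns) →
      EuclideanSpace ℝ (Fin na) → ℝ)
    (π : EuclideanSpace ℝ (Fin d) → EuclideanSpace ℝ (Fin na) →
      EuclideanSpace ℝ (Fin ns) → ℝ)
    (cT : EuclideanSpace ℝ (Fin ns) → ℝ)
    (c : Fin T → EuclideanSpace ℝ (Fin ns) → EuclideanSpace ℝ (Fin na) → ℝ)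
    (pθ : EuclideanSpace ℝ (Fin d) →
      ((Fin (T + 1) → EuclideanSpace ℝ (Fin ns)) ×
        (Fin T → EuclideanSpace ℝ (Fin na))) → ℝ)
    (Cθ : EuclideanSpace ℝ (Fin d) →
      ((Fin (T + 1) → EuclideanSpace ℝ (Fin ns)) ×
        (Fin T → EuclideanSpace ℝ (Fin na))) → ℝ)
    (hpθ : ∀ θ τ, pθ θ τ = p0 (τ.1 0) *
      ∏ t : Fin T, ptrans (τ.1 t.succ) (τ.1 t.castSucc) (τ.2 t) *
        π θ (τ.2 t) (τ.1 t.castSucc))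
    (hCθ : ∀ θ τ, Cθ θ τ = cT (τ.1 (Fin.last T)) +
      ∑ t : Fin T, (c t (τ.1 t.castSucc) (τ.2 t) +
        Real.log (π θ (τ.2 t) (τ.1 t.castSucc))))
    (hπpos : ∀ θ u x, 0 < π θ u x)
    (hπdiff : ∀ θ u x, DifferentiableAt ℝ (fun θ' => π θ' u x) θ)
    (hDUI : ∀ θ, gradient (fun θ' => ∫ τ, pθ θ' τ * Real.exp (η * Cθ θ' τ)) θ =
      ∫ τ, gradient (fun θ' => pθ θ' τ * Real.exp (η * Cθ θ' τ)) θ)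
    (hint : ∀ θ, Integrable (fun τ => (pθ θ τ * Real.exp (η * Cθ θ τ)) •
      ∑ t : Fin T,
        gradient (fun θ' => Real.log (π θ' (τ.2 t) (τ.1 t.castSucc))) θ)) :
    ∀ θ, gradient (fun θ' => ∫ τ, pθ θ' τ * Real.exp (η * Cθ θ' τ)) θ =
      (η + 1) • ∫ τ, (pθ θ τ * Real.exp (η * Cθ θ τ)) •
        ∑ t : Fin T,
          gradient (fun θ' => Real.log (π θ' (τ.2 t) (τ.1 t.castSucc))) θ := by
  intro θ
  have key : ∀ τ, gradient (fun θ' => pθ θ' τ * Real.exp (η * Cθ θ' τ)) θ =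
      (η + 1) • ((pθ θ τ * Real.exp (η * Cθ θ τ)) •
        ∑ t : Fin T,
          gradient (fun θ' => Real.log (π θ' (τ.2 t) (τ.1 t.castSucc))) θ) := by
    intro τ
    set g : Fin T → EuclideanSpace ℝ (Fin d) → ℝ :=
      fun t θ' => π θ' (τ.2 t) (τ.1 t.castSucc) with hg
    set C0 : ℝ := p0 (τ.1 0) *
      (∏ t : Fin T, ptrans (τ.1 t.succ) (τ.1 t.castSucc) (τ.2 t)) *
      Real.exp (η * (cT (τ.1 (Fin.last T)) + ∑ t : Fin T, c t (τ.1 t.castSucc) (τ.2 t)))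
      with hC0
    have hfun : ∀ θ', pθ θ' τ * Real.exp (η * Cθ θ' τ) =
        C0 * Real.exp ((η + 1) * ∑ t, Real.log (g t θ')) := by
      intro θ'
      rw [hpθ, hCθ]
      have hprod : (∏ t : Fin T, ptrans (τ.1 t.succ) (τ.1 t.castSucc) (τ.2 t) *
          π θ' (τ.2 t) (τ.1 t.castSucc)) =
          (∏ t : Fin T, ptrans (τ.1 t.succ) (τ.1 t.castSucc) (τ.2 t)) *
          Real.exp (∑ t, Real.log (g t θ')) := by
        rw [Finset.prod_mul_distrib, Real.exp_sum]
        congr 1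
        exact Finset.prod_congr rfl fun t _ => (Real.exp_log (hπpos θ' _ _)).symm
      rw [hprod]
      have hsplit : (∑ t : Fin T, (c t (τ.1 t.castSucc) (τ.2 t) +
          Real.log (π θ' (τ.2 t) (τ.1 t.castSucc)))) =
          (∑ t : Fin T, c t (τ.1 t.castSucc) (τ.2 t)) + ∑ t, Real.log (g t θ') :=
        Finset.sum_add_distrib
      rw [hsplit, hC0]
      set K := cT (τ.1 (Fin.last T)) + ∑ t : Fin T, c t (τ.1 t.castSucc) (τ.2 t)
      set S := ∑ t, Real.log (g t θ')
      have h1 : η * (cT (τ.1 (Fin.last T)) +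
          ((∑ t : Fin T, c t (τ.1 t.castSucc) (τ.2 t)) + S)) = η * K + η * S := by
        simp only [K]; ring
      have h2 : (η + 1) * S = S + η * S := by ring
      rw [h1, h2, Real.exp_add, Real.exp_add]
      ring
    have hG := aux_grad g θ (fun t θ' => hπpos θ' _ _) (fun t => hπdiff θ _ _) C0 η
    have heq : (fun θ' => pθ θ' τ * Real.exp (η * Cθ θ' τ)) =
        fun θ' => C0 * Real.exp ((η + 1) * ∑ t, Real.log (g t θ')) := funext hfun
    have := (heq ▸ hG.gradient : gradient (fun θ' => pθ θ' τ * Real.exp (η * Cθ θ' τ)) θ = _)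
    rw [this, ← hfun θ, smul_smul, mul_comm (η + 1)]
  rw [hDUI θ]
  calc (∫ τ, gradient (fun θ' => pθ θ' τ * Real.exp (η * Cθ θ' τ)) θ)
      = ∫ τ, (η + 1) • ((pθ θ τ * Real.exp (η * Cθ θ τ)) •
          ∑ t : Fin T,
            gradient (fun θ' => Real.log (π θ' (τ.2 t) (τ.1 t.castSucc))) θ) := by
        simp only [key]
    _ = _ := integral_smul _ _
end
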